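/- Let p ∈ ℝ[t] and let A = D_x P be an entrywise nonnegative n-by-n monomial matrix with Frobenius normal form Qᵀ A Q = K_{x_1} ⊕ ⋯ ⊕ K_{x_k} (Q a permutation matrix, x_i ∈ ℝ^{n_i} the blocks of Qᵀx, n_1 + ⋯ + n_k = n). Then p(A) = Q · ( ⊕_{i=1}^k Σ_{r=0}^{n_i−1} [ p_{(r,n_i)}(α_{x_i}^{1/n_i}) / α_{x_i}^{r/n_i} ] · K_{x_i}^r ) · Qᵀ. -/

import Mathlib

open Matrix

/-- The `m`-by-`m` cyclic permutation matrix `C_m` with `(i,j)`-entry `δ_{π(i),j}`,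
where `π(i) = (i mod m) + 1` (realized 0-based by `finRotate m : i ↦ i + 1`). -/
noncomputable def cycMat (m : ℕ) : Matrix (Fin m) (Fin m) ℝ :=
  (finRotate m).permMatrix ℝ

/-- `K_y := D_y C_m` for `y ∈ ℝ^m`. -/
noncomputable def Kmat {m : ℕ} (y : Fin m → ℝ) : Matrix (Fin m) (Fin m) ℝ :=
  Matrix.diagonal y * cycMat m

/-- The `r mod m`-part of `p`: `p_{(r,m)}(t) := Σ_{k ≤ deg p, k mod m = r} a_k t^k`. -/
noncomputable def polyPart (p : Polynomial ℝ) (m r : ℕ) : Polynomial ℝ :=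
  ∑ k ∈ Finset.range (p.natDegree + 1),
    if k % m = r then Polynomial.C (p.coeff k) * Polynomial.X ^ k else 0

/-!
Conjugating by the permutation matrix `Q` and by the block reindexing `e` commutes with
polynomial evaluation, and so does taking a block diagonal matrix, so `p(A)` is the reindexed
block diagonal matrix of the `p(K_{y_i})`. For a single block `K = K_y` of size `m`,
`K^m = α_y I` because `C_m^m = I` and the diagonal factors collected along the cycle multiply
to `α_y`. Hence `K^s = α_y^⌊s/m⌋ K^(s mod m)`, and grouping the monomials of `p` by their degree
modulo `m` gives `p(K) = Σ_{r<m} (Σ_{s ≡ r} a_s α_y^⌊s/m⌋) K^r`; the inner sum is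
`p_{(r,m)}(α_y^{1/m}) / α_y^{r/m}` since `α_y > 0`.
-/

open Polynomial

namespace Matrix

variable {R : Type*} [CommSemiring R]

lemma aeval_submatrix_equiv {α β : Type*} [Fintype α] [Fintype β] [DecidableEq α]
    [DecidableEq β] (e : β ≃ α) (M : Matrix α α R) (p : R[X]) :
    aeval (M.submatrix e e) p = (aeval M p).submatrix e e := by
  simpa [coe_reindexAlgEquiv, reindex_apply] using
    aeval_algHom_apply (reindexAlgEquiv R R e.symm) M p

lemma aeval_blockDiagonal' {o : Type*} {m : o → Type*} [Fintype o] [DecidableEq o]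
    [∀ i, Fintype (m i)] [∀ i, DecidableEq (m i)] (M : ∀ i, Matrix (m i) (m i) R) (p : R[X]) :
    aeval (blockDiagonal' M) p = blockDiagonal' fun i => aeval (M i) p := by
  induction p using Polynomial.induction_on' with
  | add p q hp hq => simp only [map_add, hp, hq, ← blockDiagonal'_add]; rfl
  | monomial s a =>
    simp only [aeval_monomial, Algebra.algebraMap_eq_smul_one, smul_mul_assoc, one_mul,
      ← blockDiagonal'_pow, ← blockDiagonal'_smul]
    rfl

lemma permMatrix_mul_mul_transpose {n : Type*} [Fintype n] [DecidableEq n]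
    (σ : Equiv.Perm n) (M : Matrix n n R) :
    σ.permMatrix R * M * (σ.permMatrix R)ᵀ = M.submatrix σ σ := by
  rw [transpose_permMatrix, Equiv.Perm.permMatrix, Equiv.Perm.permMatrix,
    PEquiv.toMatrix_toPEquiv_mul, PEquiv.mul_toMatrix_toPEquiv, submatrix_submatrix]
  rfl

lemma permMatrix_mul_diagonal {n : Type*} [Fintype n] [DecidableEq n]
    (σ : Equiv.Perm n) (d : n → R) :
    σ.permMatrix R * diagonal d = diagonal (d ∘ σ) * σ.permMatrix R := by
  ext i j
  rw [mul_diagonal, diagonal_mul]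
  by_cases h : σ i = j <;> simp [Equiv.toPEquiv_apply, h]

lemma diagonal_mul_permMatrix_pow {n : Type*} [Fintype n] [DecidableEq n]
    (d : n → R) (σ : Equiv.Perm n) (s : ℕ) :
    (diagonal d * σ.permMatrix R) ^ s =
      diagonal (fun i => ∏ t ∈ Finset.range s, d ((σ ^ t) i)) * (σ ^ s).permMatrix R := by
  induction s with
  | zero => simp
  | succ s ih =>
    simp_rw [Finset.prod_range_succ]
    rw [pow_succ, ih, mul_assoc, ← mul_assoc ((σ ^ s).permMatrix R), permMatrix_mul_diagonal,
      mul_assoc, ← permMatrix_mul, ← mul_assoc, diagonal_mul_diagonal, ← pow_succ']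
    rfl

end Matrix

open Fin.NatCast in
lemma finRotate_pow_apply {m : ℕ} (t : ℕ) (i : Fin (m + 1)) :
    (finRotate (m + 1) ^ t) i = i + (t : Fin (m + 1)) := by
  induction t with
  | zero => simp
  | succ t ih =>
    rw [pow_succ', Equiv.Perm.mul_apply, ih, finRotate_apply]
    push_cast
    rw [add_assoc]

open Fin.NatCast in
lemma Kmat_pow_self {m : ℕ} (hm : 0 < m) (y : Fin m → ℝ) :
    Kmat y ^ m = (∏ l, y l) • (1 : Matrix (Fin m) (Fin m) ℝ) := by
  obtain ⟨m, rfl⟩ := Nat.exists_eq_succ_of_ne_zero hm.ne'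
  have hcycle : finRotate (m + 1) ^ (m + 1) = 1 := by
    ext i
    simp [finRotate_pow_apply]
  have horbit (i : Fin (m + 1)) :
      ∏ t ∈ Finset.range (m + 1), y ((finRotate (m + 1) ^ t) i) = ∏ l, y l := by
    simp_rw [← Fin.prod_univ_eq_prod_range, finRotate_pow_apply, Fin.cast_val_eq_self]
    exact Equiv.prod_comp (Equiv.addLeft i) y
  rw [Kmat, cycMat, diagonal_mul_permMatrix_pow, hcycle, permMatrix_one, mul_one]
  simp_rw [horbit, ← smul_one_eq_diagonal]

lemma Polynomial.aeval_eq_sum_range_of_pow_eq_algebraMap {R A : Type*} [CommSemiring R]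
    [Semiring A] [Algebra R A] {a : A} {m : ℕ} (hm : 0 < m) {c : R}
    (ha : a ^ m = algebraMap R A c) (p : R[X]) :
    aeval a p = ∑ r ∈ Finset.range m,
      (∑ s ∈ Finset.range (p.natDegree + 1) with s % m = r, p.coeff s * c ^ (s / m)) • a ^ r := by
  have hpow (s : ℕ) : a ^ s = c ^ (s / m) • a ^ (s % m) := by
    conv_lhs => rw [← Nat.div_add_mod s m]
    rw [pow_add, pow_mul, ha, ← map_pow, ← Algebra.smul_def]
  calc aeval a p
      = ∑ s ∈ Finset.range (p.natDegree + 1), (p.coeff s * c ^ (s / m)) • a ^ (s % m) := by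
        rw [aeval_eq_sum_range]
        exact Finset.sum_congr rfl fun s _ => by rw [hpow, mul_smul]
    _ = _ := by
        rw [← Finset.sum_fiberwise_of_maps_to (g := (· % m)) (t := Finset.range m)
          fun s _ => Finset.mem_range.mpr (Nat.mod_lt s hm)]
        refine Finset.sum_congr rfl fun r _ => ?_
        rw [Finset.sum_smul]
        exact Finset.sum_congr rfl fun s hs => by rw [(Finset.mem_filter.mp hs).2]

lemma polyPart_eval_rpow_div_rpow (p : ℝ[X]) {m : ℕ} (hm : 0 < m) {α : ℝ} (hα : 0 < α)
    (r : ℕ) :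
    (polyPart p m r).eval (α ^ ((1 : ℝ) / m)) / α ^ ((r : ℝ) / m) =
      ∑ s ∈ Finset.range (p.natDegree + 1) with s % m = r, p.coeff s * α ^ (s / m) := by
  have hroot (s : ℕ) : (α ^ ((1 : ℝ) / m)) ^ s / α ^ (((s % m : ℕ) : ℝ) / m) = α ^ (s / m) := by
    have hexp : (1 : ℝ) / m * s - ((s % m : ℕ) : ℝ) / m = ((s / m : ℕ) : ℝ) := by
      have hdiv : (s : ℝ) = m * ((s / m : ℕ) : ℝ) + ((s % m : ℕ) : ℝ) := by
        exact_mod_cast (Nat.div_add_mod s m).symm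
      rw [hdiv]
      field_simp
      ring
    rw [← Real.rpow_natCast (α ^ _), ← Real.rpow_mul hα.le, ← Real.rpow_sub hα, hexp,
      Real.rpow_natCast]
  rw [polyPart, eval_finsetSum, Finset.sum_div, Finset.sum_filter]
  refine Finset.sum_congr rfl fun s _ => ?_
  split_ifs with h
  · rw [eval_mul, eval_C, eval_pow, eval_X, mul_div_assoc, ← h, hroot]
  · simp

lemma aeval_Kmat {m : ℕ} (hm : 0 < m) {y : Fin m → ℝ} (hy : 0 < ∏ l, y l) (p : ℝ[X]) :
    aeval (Kmat y) p = ∑ r ∈ Finset.range m,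
      ((polyPart p m r).eval ((∏ l, y l) ^ ((1 : ℝ) / m)) /
        (∏ l, y l) ^ ((r : ℝ) / m)) • Kmat y ^ r := by
  rw [aeval_eq_sum_range_of_pow_eq_algebraMap hm
    (by rw [Kmat_pow_self hm, Algebra.algebraMap_eq_smul_one])]
  simp_rw [polyPart_eval_rpow_div_rpow p hm hy]

theorem aeval_monomial_matrix_general {n : ℕ} (p : Polynomial ℝ)
    (x : Fin n → ℝ) (hx : ∀ i, 0 < x i)
    (A : Matrix (Fin n) (Fin n) ℝ)
    (k : ℕ) (ns : Fin k → ℕ) (hns : ∀ i, 0 < ns i)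
    (τ : Equiv.Perm (Fin n)) (Q : Matrix (Fin n) (Fin n) ℝ) (hQ : Q = τ.permMatrix ℝ)
    (e : (Σ i : Fin k, Fin (ns i)) ≃ Fin n)
    (y : (i : Fin k) → Fin (ns i) → ℝ)
    (hy : ∀ (i : Fin k) (j : Fin (ns i)), y i j = (Qᵀ *ᵥ x) (e ⟨i, j⟩))
    (hFNF : Qᵀ * A * Q =
      (Matrix.blockDiagonal' fun i => Kmat (y i)).submatrix e.symm e.symm) :
    Polynomial.aeval A p =
      Q * (Matrix.blockDiagonal' fun i =>
            ∑ r ∈ Finset.range (ns i),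
              ((polyPart p (ns i) r).eval ((∏ l, y i l) ^ ((1 : ℝ) / (ns i : ℝ))) /
                  (∏ l, y i l) ^ ((r : ℝ) / (ns i : ℝ))) • Kmat (y i) ^ r).submatrix
          e.symm e.symm * Qᵀ := by
  subst hQ
  have hα (i : Fin k) : 0 < ∏ l, y i l := Finset.prod_pos fun j _ => by
    rw [hy, transpose_permMatrix, permMatrix_mulVec]
    exact hx _
  have hQQ : τ.permMatrix ℝ * (τ.permMatrix ℝ)ᵀ = 1 := by
    rw [transpose_permMatrix, ← permMatrix_mul, inv_mul_cancel, permMatrix_one]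
  have hA : A = ((τ.permMatrix ℝ)ᵀ * A * τ.permMatrix ℝ).submatrix τ τ := by
    rw [← permMatrix_mul_mul_transpose]
    simp only [← mul_assoc]
    rw [hQQ, one_mul, mul_assoc, hQQ, mul_one]
  rw [hA, hFNF, permMatrix_mul_mul_transpose, aeval_submatrix_equiv, aeval_submatrix_equiv,
    aeval_blockDiagonal']
  simp_rw [aeval_Kmat (hns _) (hα _)]

/-- Let `p ∈ ℝ[t]` and let `A = D_x P_σ ≥ 0` be an `n`-by-`n`
nonnegative monomial matrix (`x > 0` entrywise) with Frobenius normal form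
`Qᵀ A Q = K_{y_1} ⊕ ⋯ ⊕ K_{y_k}`, where `Q = P_τ` is a permutation matrix and the
`y_i ∈ ℝ^{n_i}` are the consecutive blocks of `y = Qᵀ x` (the block structure being
recorded by the order-preserving bijection `e : Σ i, Fin (n_i) ≃ Fin n`,
`e ⟨i, j⟩ = n_1 + ⋯ + n_{i-1} + j`). Then
`p(A) = Q (⊕_{i=1}^k Σ_{r=0}^{n_i-1} [ p_{(r,n_i)}(α_{y_i}^{1/n_i}) / α_{y_i}^{r/n_i} ] • K_{y_i}^r) Qᵀ`. -/
theorem aeval_monomial_matrix {n : ℕ} (p : Polynomial ℝ)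
    (x : Fin n → ℝ) (hx : ∀ i, 0 < x i) (σ : Equiv.Perm (Fin n))
    (A : Matrix (Fin n) (Fin n) ℝ) (hA : A = Matrix.diagonal x * σ.permMatrix ℝ)
    (k : ℕ) (ns : Fin k → ℕ) (hns : ∀ i, 0 < ns i) (hsum : (∑ i, ns i) = n)
    (τ : Equiv.Perm (Fin n)) (Q : Matrix (Fin n) (Fin n) ℝ) (hQ : Q = τ.permMatrix ℝ)
    (e : (Σ i : Fin k, Fin (ns i)) ≃ Fin n)
    (he : ∀ (i : Fin k) (j : Fin (ns i)),
      ((e ⟨i, j⟩ : Fin n) : ℕ) = (∑ l ∈ Finset.Iio i, ns l) + (j : ℕ))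
    (y : (i : Fin k) → Fin (ns i) → ℝ)
    (hy : ∀ (i : Fin k) (j : Fin (ns i)), y i j = (Qᵀ *ᵥ x) (e ⟨i, j⟩))
    (hFNF : Qᵀ * A * Q =
      (Matrix.blockDiagonal' fun i => Kmat (y i)).submatrix e.symm e.symm) :
    Polynomial.aeval A p =
      Q * (Matrix.blockDiagonal' fun i =>
            ∑ r ∈ Finset.range (ns i),
              ((polyPart p (ns i) r).eval ((∏ l, y i l) ^ ((1 : ℝ) / (ns i : ℝ))) /
                  (∏ l, y i l) ^ ((r : ℝ) / (ns i : ℝ))) • Kmat (y i) ^ r).submatrix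
          e.symm e.symm * Qᵀ :=
  aeval_monomial_matrix_general p x hx A k ns hns τ Q hQ e y hy hFNF
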